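/- Let n ≥ 1, let H₀ be the matrix indexed by ℤ/(2n+1) with entries (H₀)_{ij} = δ_{ij} + (1/2)(δ_{i,j+1} + δ_{i,j−1}) (indices mod 2n+1), and let ψ = p_n be the unit vector with components ψ_j = exp(2πi·jn/(2n+1))/√(2n+1). Then for every subset S of ℤ/(2n+1), −⟨ψ| 1_S H₀ 1_{S^c} |ψ⟩ = −(cos(2πn/(2n+1))/(2(2n+1)))·(|{j ∈ S : j+1 ∈ S^c}| + |{j ∈ S : j−1 ∈ S^c}|), where S^c is the complement of S and addition is mod 2n+1. -/

import Mathlib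

open scoped BigOperators

/-- The hopping Hamiltonian of a single particle on a ring with `2n+1` sites:
`(H₀)_{ij} = δ_{ij} + (1/2)(δ_{i,j+1} + δ_{i,j-1})`, indices mod `2n+1`. -/
noncomputable def ringH (n : ℕ) : Matrix (ZMod (2 * n + 1)) (ZMod (2 * n + 1)) ℂ :=
  fun i j => (if i = j then 1 else 0) +
    (1 / 2) * ((if i = j + 1 then 1 else 0) + (if i = j - 1 then 1 else 0))

/-- The momentum eigenstate `p_k`, with components
`(p_k)_j = exp(2πi·jk/(2n+1))/√(2n+1)`. -/
noncomputable def pvec (n : ℕ) (k : ℤ) : ZMod (2 * n + 1) → ℂ :=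
  fun j => Complex.exp (2 * Real.pi * Complex.I * (j.val : ℂ) * (k : ℂ) / (2 * n + 1)) /
    (Real.sqrt (2 * n + 1) : ℂ)

/-! Since `S` and `Sᶜ` are disjoint, only the hopping part of `H₀` contributes, through the
boundary pairs `(x, x ± 1)` with `x ∈ S`, `x ± 1 ∉ S`. For a plane wave, `conj ψ_x ψ_{x ± 1}` is
the constant phase `e^{± 2πin/(2n+1)}/(2n+1)`, and translating by `1` shows that there are as many
boundary pairs of each orientation, so the two phases pair up to `2 cos(2πn/(2n+1))`. -/

open Finset ZMod

theorem card_filter_add_notMem_eq {G : Type*} [AddGroup G] [DecidableEq G] (S : Finset G) (a : G) :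
    #{j ∈ S | j + a ∉ S} = #{j ∈ S | j - a ∉ S} := by
  have hin : #{j ∈ S | j + a ∈ S} = #{j ∈ S | j - a ∈ S} := by
    refine card_bij (fun j _ => j + a) (fun j hj => ?_) (fun _ _ _ _ h => add_right_cancel h)
      (fun j hj => ⟨j - a, ?_, sub_add_cancel j a⟩)
    · simp only [mem_filter, add_sub_cancel_right] at hj ⊢
      exact ⟨hj.2, hj.1⟩
    · simp only [mem_filter, sub_add_cancel] at hj ⊢
      exact ⟨hj.2, hj.1⟩
  have hplus := card_filter_add_card_filter_not (s := S) (p := fun j => j + a ∈ S)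
  have hminus := card_filter_add_card_filter_not (s := S) (p := fun j => j - a ∈ S)
  omega

theorem ringH_of_ne {n : ℕ} {i j : ZMod (2 * n + 1)} (h : i ≠ j) :
    ringH n i j = ((if i + 1 = j then 1 else 0) + (if i - 1 = j then 1 else 0)) / 2 := by
  simp only [ringH, if_neg h, eq_sub_iff_add_eq, sub_eq_iff_eq_add]
  ring

theorem sum_mul_ringH_mul {n : ℕ} (S : Finset (ZMod (2 * n + 1))) (f g : ZMod (2 * n + 1) → ℂ) :
    ∑ x ∈ S, ∑ y ∈ Sᶜ, f x * ringH n x y * g y =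
      (∑ x ∈ S with x + 1 ∉ S, f x * g (x + 1) + ∑ x ∈ S with x - 1 ∉ S, f x * g (x - 1)) / 2 := by
  rw [sum_filter, sum_filter, ← sum_add_distrib, sum_div]
  refine sum_congr rfl fun x hx => ?_
  calc ∑ y ∈ Sᶜ, f x * ringH n x y * g y
      = ∑ y ∈ Sᶜ, ((if x + 1 = y then f x * g y else 0) +
          (if x - 1 = y then f x * g y else 0)) / 2 := by
        refine sum_congr rfl fun y hy => ?_
        rw [ringH_of_ne (ne_of_mem_of_not_mem hx (mem_compl.mp hy))]
        split_ifs <;> ring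
    _ = _ := by
        rw [← sum_div, sum_add_distrib, sum_ite_eq, sum_ite_eq]
        simp only [mem_compl]

theorem pvec_eq_stdAddChar (n : ℕ) (k : ℤ) (j : ZMod (2 * n + 1)) :
    pvec n k j = stdAddChar ((k : ZMod (2 * n + 1)) * j) / (Real.sqrt (2 * n + 1) : ℂ) := by
  have hcast : (k : ZMod (2 * n + 1)) * j = ((k * j.val : ℤ) : ZMod (2 * n + 1)) := by
    push_cast
    rw [natCast_zmod_val]
  rw [hcast, stdAddChar_coe, pvec]
  push_cast
  ring_nf

theorem starRingEnd_pvec_mul_pvec (n : ℕ) (k : ℤ) (x y : ZMod (2 * n + 1)) :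
    starRingEnd ℂ (pvec n k x) * pvec n k y =
      stdAddChar ((k : ZMod (2 * n + 1)) * (y - x)) / (2 * n + 1) := by
  have hsqrt : (Real.sqrt (2 * n + 1) : ℂ) * (Real.sqrt (2 * n + 1) : ℂ) = 2 * n + 1 := by
    rw [← Complex.ofReal_mul, Real.mul_self_sqrt (by positivity)]
    push_cast
    ring
  rw [pvec_eq_stdAddChar, pvec_eq_stdAddChar, map_div₀, ← AddChar.map_neg_eq_conj,
    Complex.conj_ofReal, div_mul_div_comm, ← AddChar.map_add_eq_mul, hsqrt, mul_sub, neg_add_eq_sub]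

theorem stdAddChar_intCast_add_neg {N : ℕ} [NeZero N] (k : ℤ) :
    stdAddChar (k : ZMod N) + stdAddChar (-(k : ZMod N)) =
      2 * (Real.cos (2 * Real.pi * k / N) : ℂ) := by
  rw [← Int.cast_neg, stdAddChar_coe, stdAddChar_coe, Complex.ofReal_cos, Complex.cos]
  push_cast
  ring_nf

theorem stmt_17_general (n : ℕ) (S : Finset (ZMod (2 * n + 1))) :
    -(∑ x ∈ S, ∑ y ∈ Sᶜ, (starRingEnd ℂ) (pvec n n x) * ringH n x y * pvec n n y) =
      ((-(Real.cos (2 * Real.pi * (n : ℝ) / (2 * n + 1)) / (2 * (2 * n + 1))) *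
        (((S.filter fun j => j + 1 ∉ S).card : ℝ) +
          ((S.filter fun j => j - 1 ∉ S).card : ℝ)) : ℝ) : ℂ) := by
  have hcos := stdAddChar_intCast_add_neg (N := 2 * n + 1) n
  rw [sum_mul_ringH_mul]
  simp only [starRingEnd_pvec_mul_pvec, add_sub_cancel_left, sub_sub_cancel_left, mul_one,
    mul_neg, sum_const, nsmul_eq_mul]
  rw [card_filter_add_notMem_eq]
  push_cast at hcos ⊢
  generalize (2 * n + 1 : ℂ) = N at hcos ⊢
  linear_combination (-(#{j ∈ S | j - 1 ∉ S} : ℂ) / (2 * N)) * hcos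

/-- The conductance computation for the ring Hamiltonian with `ψ = p_n`: for every
`S ⊆ ℤ/(2n+1)`, `-⟨ψ|1_S H₀ 1_{S^c}|ψ⟩` equals
`-(cos(2πn/(2n+1))/(2(2n+1)))·(|{j∈S : j+1∈S^c}| + |{j∈S : j-1∈S^c}|)`. -/
theorem stmt_17 (n : ℕ) (hn : 1 ≤ n) (S : Finset (ZMod (2 * n + 1))) :
    -(∑ x ∈ S, ∑ y ∈ Sᶜ, (starRingEnd ℂ) (pvec n n x) * ringH n x y * pvec n n y) =
      ((-(Real.cos (2 * Real.pi * (n : ℝ) / (2 * n + 1)) / (2 * (2 * n + 1))) *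
        (((S.filter fun j => j + 1 ∉ S).card : ℝ) +
          ((S.filter fun j => j - 1 ∉ S).card : ℝ)) : ℝ) : ℂ) :=
  stmt_17_general n S
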